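/- Let M be an MV-effect algebra and define ⟨U|V⟩ = (⋀U) ∧ (⋁V) for finite subsets U, V of M (with ⋀∅ = 1, ⋁∅ = 0). Then ⟨·|·⟩ is a strong compatibility support mapping for M; in particular it satisfies ⟨U|V∪{c}⟩ ⊖ ⟨U|V⟩ = ⟨U∪{c}|{1}⟩ ⊖ ⟨U∪{c}|V⟩ for all finite U, V and all c. -/
import Mathlib


universe u

/-- An effect algebra: a partial commutative, associative operation `add`
(modelled as an `Option`-valued total operation), with constants `zero`, `one`,
unique orthosupplements, and `a ⊕ 1` defined only for `a = 0`. -/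
structure EffectAlgebra (α : Type u) where
  add : α → α → Option α
  zero : α
  one : α
  add_comm : ∀ a b : α, add a b = add b a
  add_assoc : ∀ a b c ab abc : α, add a b = some ab → add ab c = some abc →
    ∃ bc : α, add b c = some bc ∧ add a bc = some abc
  orthosupp : ∀ a : α, ∃! a' : α, add a a' = some one
  add_one : ∀ a b : α, add a one = some b → a = zero

namespace EffectAlgebra

variable {α : Type u}

/-- The induced order: `a ≤ b` iff `∃ c, a ⊕ c = b`. -/
def le (E : EffectAlgebra α) (a b : α) : Prop := ∃ c, E.add a c = some b

/-- The orthosupplement `a'`. -/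
noncomputable def compl (E : EffectAlgebra α) (a : α) : α :=
  (E.orthosupp a).exists.choose

open Classical in
/-- The partial difference `b ⊖ a` (junk value `0` when `a ≤ b` fails). -/
noncomputable def sub (E : EffectAlgebra α) (b a : α) : α :=
  if h : ∃ c, E.add a c = some b then h.choose else E.zero

/-- Iterated partial sum of a list of elements. -/
noncomputable def osum (E : EffectAlgebra α) : List α → Option α
  | [] => some E.zero
  | a :: l => (E.osum l).bind fun s => E.add a s

end EffectAlgebra

namespace EffectAlgebra

variable {α : Type u}

/-- `f` is a compatibility support mapping for `S` (with `1 ∈ S`). -/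
def IsCSM [DecidableEq α] (E : EffectAlgebra α) (S : Set α) (f : Finset α → Finset α → α) : Prop :=
  E.one ∈ S ∧
  (∀ U V₁ V₂ : Finset α, ↑U ⊆ S → ↑V₁ ⊆ S → ↑V₂ ⊆ S → V₁ ⊆ V₂ →
    E.le (f U V₁) (f U V₂)) ∧
  (∀ U V : Finset α, ↑U ⊆ S → ↑V ⊆ S → E.le (f U V) (f U {E.one})) ∧
  (∀ U : Finset α, ↑U ⊆ S → f U ∅ = E.zero) ∧
  (∀ c ∈ S, f ∅ {c} = c) ∧
  (∀ (U V : Finset α) (c : α), ↑U ⊆ S → ↑V ⊆ S → c ∈ S → c ∉ U → c ∉ V →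
    E.sub (f (insert c U) {E.one}) (f (insert c U) V) =
      E.sub (f U (insert c V)) (f U V))

/-- `f` is a strong compatibility support mapping for `S`:
condition (e*) holds with no restriction on `c`. -/
def IsStrongCSM [DecidableEq α] (E : EffectAlgebra α) (S : Set α) (f : Finset α → Finset α → α) : Prop :=
  E.one ∈ S ∧
  (∀ U V₁ V₂ : Finset α, ↑U ⊆ S → ↑V₁ ⊆ S → ↑V₂ ⊆ S → V₁ ⊆ V₂ →
    E.le (f U V₁) (f U V₂)) ∧
  (∀ U V : Finset α, ↑U ⊆ S → ↑V ⊆ S → E.le (f U V) (f U {E.one})) ∧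
  (∀ U : Finset α, ↑U ⊆ S → f U ∅ = E.zero) ∧
  (∀ c ∈ S, f ∅ {c} = c) ∧
  (∀ (U V : Finset α) (c : α), ↑U ⊆ S → ↑V ⊆ S → c ∈ S →
    E.sub (f (insert c U) {E.one}) (f (insert c U) V) =
      E.sub (f U (insert c V)) (f U V))

/-- `D(X,A) = ⟨X|{1}⟩ ⊖ ⟨X|A∖X⟩`. -/
noncomputable def Dmap [DecidableEq α] (E : EffectAlgebra α)
    (f : Finset α → Finset α → α) (X A : Finset α) : α :=
  E.sub (f X {E.one}) (f X (A \ X))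

end EffectAlgebra


namespace EffectAlgebra

set_option linter.unusedSectionVars false

variable {α : Type u}

theorem comm' (E : EffectAlgebra α) {a b ab : α} (h : E.add a b = some ab) :
    E.add b a = some ab := (E.add_comm b a).trans h

theorem assoc' (E : EffectAlgebra α) {a b c bc abc : α}
    (h1 : E.add b c = some bc) (h2 : E.add a bc = some abc) :
    ∃ ab, E.add a b = some ab ∧ E.add ab c = some abc := by
  obtain ⟨ba, hba, hcba⟩ := E.add_assoc c b a bc abc (E.comm' h1) (E.comm' h2)
  exact ⟨ba, E.comm' hba, E.comm' hcba⟩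

theorem cancel (E : EffectAlgebra α) {a b c p : α}
    (hb : E.add a b = some p) (hc : E.add a c = some p) : b = c := by
  obtain ⟨p', hp', -⟩ := E.orthosupp p
  obtain ⟨m, ham, hbm⟩ := E.add_assoc b a p' p E.one (E.comm' hb) hp'
  obtain ⟨m₂, ham₂, hcm₂⟩ := E.add_assoc c a p' p E.one (E.comm' hc) hp'
  rw [ham] at ham₂
  obtain rfl : m = m₂ := Option.some.inj ham₂
  obtain ⟨x, hx, hux⟩ := E.orthosupp m
  rw [hux b (E.comm' hbm), hux c (E.comm' hcm₂)]

theorem one_add_zero (E : EffectAlgebra α) : E.add E.one E.zero = some E.one := by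
  obtain ⟨o, ho, -⟩ := E.orthosupp E.one
  have hz : o = E.zero := E.add_one o E.one (E.comm' ho)
  rwa [hz] at ho

theorem add_zero' (E : EffectAlgebra α) (a : α) : E.add a E.zero = some a := by
  obtain ⟨a', ha', -⟩ := E.orthosupp a
  have hx : E.add a' a = some E.one := E.comm' ha'
  obtain ⟨m, hm, h2⟩ := E.add_assoc a' a E.zero E.one E.one hx E.one_add_zero
  obtain ⟨y, hy, huy⟩ := E.orthosupp a'
  have : m = a := by rw [huy m h2, huy a hx]
  rwa [this] at hm

theorem zero_add' (E : EffectAlgebra α) (a : α) : E.add E.zero a = some a :=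
  E.comm' (E.add_zero' a)

section Ordered

variable [Lattice α] [BoundedOrder α] (E : EffectAlgebra α)

theorem sub_spec (hle : ∀ a b : α, a ≤ b ↔ E.le a b) {a b : α} (hab : a ≤ b) :
    E.add a (E.sub b a) = some b := by
  have h : ∃ c, E.add a c = some b := (hle a b).mp hab
  simp only [EffectAlgebra.sub, dif_pos h]
  exact h.choose_spec

theorem sub_eq (hle : ∀ a b : α, a ≤ b ↔ E.le a b) {a b c : α}
    (h : E.add a c = some b) : E.sub b a = c :=
  E.cancel (E.sub_spec hle ((hle a b).mpr ⟨c, h⟩)) h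

theorem le_of_add (hle : ∀ a b : α, a ≤ b ↔ E.le a b) {a b c : α}
    (h : E.add a c = some b) : a ≤ b := (hle a b).mpr ⟨c, h⟩

theorem le_of_add' (hle : ∀ a b : α, a ≤ b ↔ E.le a b) {a b c : α}
    (h : E.add a c = some b) : c ≤ b := E.le_of_add hle (E.comm' h)

theorem add_le_cancel (hle : ∀ a b : α, a ≤ b ↔ E.le a b) {b t s u w : α}
    (hu : E.add b t = some u) (hw : E.add b s = some w) (huw : u ≤ w) : t ≤ s := by
  obtain ⟨d, hd⟩ := (hle u w).mp huw
  obtain ⟨td, htd, hbtd⟩ := E.add_assoc b t d u w hu hd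
  have hts : td = s := E.cancel hbtd hw
  exact E.le_of_add hle (hts ▸ htd)

theorem sub_antitone (hle : ∀ a b : α, a ≤ b ↔ E.le a b) {m n b : α}
    (hmn : m ≤ n) (hnb : n ≤ b) : E.sub b n ≤ E.sub b m := by
  have h1 := E.sub_spec hle hmn
  have h2 := E.sub_spec hle hnb
  obtain ⟨x, hx, hmx⟩ := E.add_assoc m (E.sub n m) (E.sub b n) n b h1 h2
  rw [E.sub_eq hle hmx]
  exact E.le_of_add' hle hx

theorem sub_le_sub_iff (hle : ∀ a b : α, a ≤ b ↔ E.le a b) {m y z : α}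
    (hmy : m ≤ y) (hmz : m ≤ z) : y ≤ z ↔ E.sub y m ≤ E.sub z m := by
  constructor
  · intro h
    exact E.add_le_cancel hle (E.sub_spec hle hmy) (E.sub_spec hle hmz) h
  · intro h
    obtain ⟨d, hd⟩ := (hle _ _).mp h
    obtain ⟨ab, hab, hab2⟩ := E.assoc' hd (E.sub_spec hle hmz)
    have : ab = y := (Option.some.inj ((E.sub_spec hle hmy).symm.trans hab)).symm
    exact E.le_of_add hle (this ▸ hab2)

theorem add_mem (hle : ∀ a b : α, a ≤ b ↔ E.le a b) {w v m y : α}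
    (hwv : w ≤ v) (hmv : E.add m v = some y) : ∃ u, E.add m w = some u := by
  obtain ⟨d, hd⟩ := (hle w v).mp hwv
  obtain ⟨dm, hdm, hwdm⟩ := E.add_assoc w d m v y hd (E.comm' hmv)
  obtain ⟨mw, hmw, -⟩ := E.add_assoc d m w dm y hdm (E.comm' hwdm)
  exact ⟨mw, hmw⟩

theorem psi_inf (hle : ∀ a b : α, a ≤ b ↔ E.le a b) {m y z : α}
    (hmy : m ≤ y) (hmz : m ≤ z) :
    E.sub (y ⊓ z) m = E.sub y m ⊓ E.sub z m := by
  have hmi : m ≤ y ⊓ z := le_inf hmy hmz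
  apply le_antisymm
  · exact le_inf ((E.sub_le_sub_iff hle hmi hmy).mp inf_le_left)
      ((E.sub_le_sub_iff hle hmi hmz).mp inf_le_right)
  · obtain ⟨u, hu⟩ := E.add_mem hle (inf_le_left : E.sub y m ⊓ E.sub z m ≤ E.sub y m)
      (E.sub_spec hle hmy)
    have hwu : E.sub u m = E.sub y m ⊓ E.sub z m := E.sub_eq hle hu
    have hmu : m ≤ u := E.le_of_add hle hu
    have huy : u ≤ y := (E.sub_le_sub_iff hle hmu hmy).mpr (hwu ▸ inf_le_left)
    have huz : u ≤ z := (E.sub_le_sub_iff hle hmu hmz).mpr (hwu ▸ inf_le_right)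
    rw [← hwu]
    exact (E.sub_le_sub_iff hle hmu hmi).mp (le_inf huy huz)

theorem mv_le_sup_inf (hle : ∀ a b : α, a ≤ b ↔ E.le a b)
    (hMV : ∀ a b : α, E.sub (a ⊔ b) a = E.sub b (a ⊓ b)) (a b c : α) :
    (a ⊔ b) ⊓ (a ⊔ c) ≤ a ⊔ b ⊓ c := by
  have hab : a ≤ a ⊔ b := le_sup_left
  have hac : a ≤ a ⊔ c := le_sup_left
  have key : E.sub ((a ⊔ b) ⊓ (a ⊔ c)) a ≤ E.sub (a ⊔ b ⊓ c) a := by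
    rw [E.psi_inf hle hab hac, hMV a b, hMV a c, hMV a (b ⊓ c)]
    have hm1 : a ⊓ (b ⊓ c) ≤ a ⊓ b := inf_le_inf_left a inf_le_left
    have hm2 : a ⊓ (b ⊓ c) ≤ a ⊓ c := inf_le_inf_left a inf_le_right
    have hmb : a ⊓ (b ⊓ c) ≤ b := le_trans inf_le_right inf_le_left
    have hmc : a ⊓ (b ⊓ c) ≤ c := le_trans inf_le_right inf_le_right
    calc E.sub b (a ⊓ b) ⊓ E.sub c (a ⊓ c)
        ≤ E.sub b (a ⊓ (b ⊓ c)) ⊓ E.sub c (a ⊓ (b ⊓ c)) :=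
          inf_le_inf (E.sub_antitone hle hm1 inf_le_right)
            (E.sub_antitone hle hm2 inf_le_right)
      _ = E.sub (b ⊓ c) (a ⊓ (b ⊓ c)) := (E.psi_inf hle hmb hmc).symm
  exact (E.sub_le_sub_iff hle (le_inf hab hac) le_sup_left).mpr key

end Ordered

end EffectAlgebra

/-- In an MV-effect algebra, `⟨U|V⟩ = (⋀U) ⊓ (⋁V)` is a strong compatibility
support mapping (for `S` the whole algebra). -/
theorem mv_meetJoin_isStrongCSM {α : Type u} [DecidableEq α] [Lattice α] [BoundedOrder α]
    (E : EffectAlgebra α)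
    (hle : ∀ a b : α, a ≤ b ↔ E.le a b)
    (htop : (⊤ : α) = E.one) (hbot : (⊥ : α) = E.zero)
    (hMV : ∀ a b : α, E.sub (a ⊔ b) a = E.sub b (a ⊓ b)) :
    E.IsStrongCSM Set.univ (fun U V => (U.inf id) ⊓ (V.sup id)) := by
  refine ⟨Set.mem_univ _, ?_, ?_, ?_, ?_, ?_⟩
  · intro U V₁ V₂ _ _ _ h
    exact (hle _ _).mp (inf_le_inf_left _ (Finset.sup_mono h))
  · intro U V _ _
    refine (hle _ _).mp ?_
    simp only [Finset.sup_singleton, id]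
    exact inf_le_inf_left _ (htop ▸ le_top)
  · intro U _
    simp only [Finset.sup_empty, inf_bot_eq]
    exact hbot
  · intro c _
    simp only [Finset.inf_empty, Finset.sup_singleton, id, top_inf_eq]
  · intro U V c _ _ _
    simp only [Finset.sup_singleton, Finset.inf_insert, Finset.sup_insert, id]
    set A := U.inf id with hA
    set v := V.sup id with hv
    rw [← htop, inf_top_eq]
    -- goal : E.sub (c ⊓ A) (c ⊓ A ⊓ v) = E.sub (A ⊓ (c ⊔ v)) (A ⊓ v)
    have hds : A ⊓ (c ⊔ v) ≤ (A ⊓ c) ⊔ (A ⊓ v) := by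
      have s1 : ((A ⊓ c) ⊔ A) ⊓ ((A ⊓ c) ⊔ v) ≤ (A ⊓ c) ⊔ (A ⊓ v) :=
        E.mv_le_sup_inf hle hMV (A ⊓ c) A v
      have s2 : (v ⊔ A) ⊓ (v ⊔ c) ≤ v ⊔ (A ⊓ c) :=
        E.mv_le_sup_inf hle hMV v A c
      have t2 : A ⊓ (c ⊔ v) ≤ (A ⊓ c) ⊔ v := by
        have : A ⊓ (c ⊔ v) ≤ (v ⊔ A) ⊓ (v ⊔ c) :=
          le_inf (inf_le_left.trans le_sup_right)
            (inf_le_right.trans (sup_comm c v).le)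
        exact (this.trans s2).trans (sup_comm v (A ⊓ c)).le
      exact (le_inf (inf_le_left.trans le_sup_right) t2).trans s1
    have hd : A ⊓ (c ⊔ v) = (A ⊓ v) ⊔ (A ⊓ c) :=
      le_antisymm (hds.trans (sup_comm _ _).le)
        (sup_le (le_inf inf_le_left (inf_le_right.trans le_sup_right))
          (le_inf inf_le_left (inf_le_right.trans le_sup_left)))
    rw [hd, hMV (A ⊓ v) (A ⊓ c)]
    have h1 : c ⊓ A = A ⊓ c := inf_comm c A
    rw [h1]
    have h2 : A ⊓ c ⊓ v = A ⊓ v ⊓ (A ⊓ c) :=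
      le_antisymm
        (le_inf (le_inf (inf_le_left.trans inf_le_left) inf_le_right) inf_le_left)
        (le_inf inf_le_right (inf_le_left.trans inf_le_right))
    rw [h2]
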